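/- arXiv:1507.04195 — 4 statements merged into one kernel-verified Lean document; each statement's English description precedes it below -/
import Mathlib

section
/- Let α, β ∈ π. For all h ∈ H_α one has Δ_{α,β}(h_{(1,αβ)}) · I^R_{α,β} · (1_α ⊗ S_{β⁻¹}(h_{(2,β⁻¹)})) = I^R_{α,β} · (h ⊗ 1_β), where h_{(1,αβ)} ⊗ h_{(2,β⁻¹)} = Δ_{αβ,β⁻¹}(h). -/
open scoped TensorProduct
open TensorProduct

universe u v
set_option maxHeartbeats 1000000

section QH
variable (k : Type u) [Field k] {π : Type v} [Group π]
variable (H : π → Type u) [∀ a, Ring (H a)] [∀ a, Algebra k (H a)]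

/-- Transport along equality of group elements, as a `k`-linear map. -/
def castL {a b : π} (e : a = b) : H a →ₗ[k] H b := by subst e; exact LinearMap.id

/-- Transport along equality of group elements, as a `k`-algebra map. -/
def castA {a b : π} (e : a = b) : H a →ₐ[k] H b := by subst e; exact AlgHom.id k _

/-- A quasi-Hopf `π`-coalgebra (quasi-Turaev group coalgebra without the crossing):
a family of `k`-algebras `{H α}` with comultiplications `Δ_{α,β}`, counit `ε`,
invertible associators `Φ_{α,β,γ}`, antipodes `S_α` and elements `p_α, q_α`. -/
structure QuasiHopfGCoalgebra where
  /-- comultiplication -/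
  Δ : ∀ a b : π, H (a * b) →ₐ[k] (H a ⊗[k] H b)
  /-- counit -/
  ε : H 1 →ₐ[k] k
  /-- the associator `Φ_{α,β,γ} ∈ H_α ⊗ H_β ⊗ H_γ` -/
  Φ : ∀ a b c : π, H a ⊗[k] (H b ⊗[k] H c)
  /-- the inverse associator -/
  Φinv : ∀ a b c : π, H a ⊗[k] (H b ⊗[k] H c)
  Φ_mul_Φinv : ∀ a b c : π, Φ a b c * Φinv a b c = 1
  Φinv_mul_Φ : ∀ a b c : π, Φinv a b c * Φ a b c = 1
  /-- the antipode, a family of bijective `k`-linear maps -/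
  S : ∀ a : π, H a ≃ₗ[k] H a⁻¹
  S_one : ∀ a : π, S a 1 = 1
  /-- the antipode is anti-multiplicative -/
  S_mul : ∀ (a : π) (x y : H a), S a (x * y) = S a y * S a x
  p : ∀ a : π, H a
  q : ∀ a : π, H a
  /-- quasi-coassociativity:
  `(id ⊗ Δ_{β,γ})Δ_{α,βγ}(h) ⬝ Φ_{α,β,γ} = Φ_{α,β,γ} ⬝ (Δ_{α,β} ⊗ id)Δ_{αβ,γ}(h)` -/
  coassoc : ∀ (a b c : π) (h : H (a * b * c)),
    (TensorProduct.map LinearMap.id (Δ b c).toLinearMap)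
        ((Δ a (b * c)) (castL k H (mul_assoc a b c) h)) * Φ a b c
      = Φ a b c *
        (TensorProduct.assoc k (H a) (H b) (H c))
          ((TensorProduct.map (Δ a b).toLinearMap LinearMap.id) ((Δ (a * b) c) h))
  /-- right counit law `(id ⊗ ε)Δ_{α,1} = id` -/
  counit_right : ∀ (a : π) (h : H a),
    (TensorProduct.rid k (H a))
      ((TensorProduct.map LinearMap.id (ε : H 1 →ₗ[k] k))
        ((Δ a 1) (castL k H (mul_one a).symm h))) = h
  /-- left counit law `(ε ⊗ id)Δ_{1,α} = id` -/
  counit_left : ∀ (a : π) (h : H a),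
    (TensorProduct.lid k (H a))
      ((TensorProduct.map (ε : H 1 →ₗ[k] k) LinearMap.id)
        ((Δ 1 a) (castL k H (one_mul a).symm h))) = h
  /-- the pentagon identity -/
  pentagon : ∀ a b c d : π,
    ((1 : H a) ⊗ₜ[k] Φ b c d) *
      (TensorProduct.map LinearMap.id
          ((TensorProduct.assoc k (H b) (H c) (H d)).toLinearMap ∘ₗ
            TensorProduct.map (Δ b c).toLinearMap LinearMap.id)
        (Φ a (b * c) d)) *
      ((TensorProduct.map LinearMap.id (TensorProduct.assoc k (H b) (H c) (H d)).toLinearMap)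
        ((TensorProduct.assoc k (H a) (H b ⊗[k] H c) (H d)) ((Φ a b c) ⊗ₜ[k] (1 : H d))))
    = (TensorProduct.map LinearMap.id
          (TensorProduct.map LinearMap.id (Δ c d).toLinearMap) (Φ a b (c * d))) *
      ((TensorProduct.assoc k (H a) (H b) (H c ⊗[k] H d))
        ((TensorProduct.map (Δ a b).toLinearMap LinearMap.id) (Φ (a * b) c d)))
  /-- normalization `(id ⊗ ε ⊗ id)(Φ_{α,1,β}) = 1 ⊗ 1` -/
  Φ_normal : ∀ a b : π,
    (TensorProduct.map LinearMap.id
      ((TensorProduct.lid k (H b)).toLinearMap ∘ₗ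
        TensorProduct.map (ε : H 1 →ₗ[k] k) LinearMap.id) (Φ a 1 b)) = (1 : H a ⊗[k] H b)
  /-- `S_α(h₁) p_{α⁻¹} h₂ = ε(h) p_{α⁻¹}` for `h ∈ H_1` -/
  antipode_p : ∀ (a : π) (h : H 1),
    (LinearMap.mul' k (H a⁻¹) ∘ₗ
        TensorProduct.map (LinearMap.mulRight k (p a⁻¹) ∘ₗ (S a).toLinearMap) LinearMap.id)
      ((Δ a a⁻¹) (castL k H (mul_inv_cancel a).symm h)) = ε h • p a⁻¹
  /-- `h₁ q_α S_{α⁻¹}(h₂) = ε(h) q_α` for `h ∈ H_1` -/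
  antipode_q : ∀ (a : π) (h : H 1),
    (LinearMap.mul' k (H a) ∘ₗ
        TensorProduct.map (LinearMap.mulRight k (q a))
          (castL k H (inv_inv a) ∘ₗ (S a⁻¹).toLinearMap))
      ((Δ a a⁻¹) (castL k H (mul_inv_cancel a).symm h)) = ε h • q a
  /-- `Y¹_α q_α S_{α⁻¹}(Y²_{α⁻¹}) p_α Y³_α = 1_α` where `Φ_{α,α⁻¹,α} = Y¹ ⊗ Y² ⊗ Y³` -/
  antipode_Φ : ∀ a : π,
    (LinearMap.mul' k (H a) ∘ₗ
      TensorProduct.map (LinearMap.mulRight k (q a))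
        (LinearMap.mul' k (H a) ∘ₗ
          TensorProduct.map
            (LinearMap.mulRight k (p a) ∘ₗ castL k H (inv_inv a) ∘ₗ (S a⁻¹).toLinearMap)
            LinearMap.id))
      (Φ a a⁻¹ a) = 1
  /-- `S_{α⁻¹}(y¹_{α⁻¹}) p_α y²_α q_α S_{α⁻¹}(y³_{α⁻¹}) = 1_α`
  where `Φ⁻¹_{α⁻¹,α,α⁻¹} = y¹ ⊗ y² ⊗ y³` -/
  antipode_Φinv : ∀ a : π,
    (LinearMap.mul' k (H a) ∘ₗ
      TensorProduct.map
        (LinearMap.mulRight k (p a) ∘ₗ castL k H (inv_inv a) ∘ₗ (S a⁻¹).toLinearMap)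
        (LinearMap.mul' k (H a) ∘ₗ
          TensorProduct.map (LinearMap.mulRight k (q a))
            (castL k H (inv_inv a) ∘ₗ (S a⁻¹).toLinearMap)))
      (Φinv a⁻¹ a a⁻¹) = 1

namespace QuasiHopfGCoalgebra
variable {k H}
variable (T : QuasiHopfGCoalgebra k H)

/-- `I^R_{α,β} = y¹_α ⊗ y²_β q_β S_{β⁻¹}(y³_{β⁻¹})` where `Φ⁻¹_{α,β,β⁻¹} = y¹ ⊗ y² ⊗ y³` -/
noncomputable def IR (a b : π) : H a ⊗[k] H b :=
  TensorProduct.map LinearMap.id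
    (LinearMap.mul' k (H b) ∘ₗ
      TensorProduct.map (LinearMap.mulRight k (T.q b))
        (castL k H (inv_inv b) ∘ₗ (T.S b⁻¹).toLinearMap))
    (T.Φinv a b b⁻¹)

/-- `J^R_{α,β} = Y¹_α ⊗ S_β⁻¹(p_{β⁻¹} Y³_{β⁻¹}) Y²_β` where `Φ_{α,β,β⁻¹} = Y¹ ⊗ Y² ⊗ Y³` -/
noncomputable def JR (a b : π) : H a ⊗[k] H b :=
  TensorProduct.map LinearMap.id
    (LinearMap.mul' k (H b) ∘ₗ
      TensorProduct.map ((T.S b).symm.toLinearMap ∘ₗ LinearMap.mulLeft k (T.p b⁻¹))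
          LinearMap.id ∘ₗ
        (TensorProduct.comm k (H b) (H b⁻¹)).toLinearMap)
    (T.Φ a b b⁻¹)

/-- `I^L_{α,β} = Y²_α S_α⁻¹(Y¹_{α⁻¹} q_{α⁻¹}) ⊗ Y³_β` where `Φ_{α⁻¹,α,β} = Y¹ ⊗ Y² ⊗ Y³` -/
noncomputable def IL (a b : π) : H a ⊗[k] H b :=
  TensorProduct.map (LinearMap.mul' k (H a)) LinearMap.id
    ((TensorProduct.assoc k (H a) (H a) (H b)).symm
      ((TensorProduct.leftComm k (H a) (H a) (H b))
        (TensorProduct.map ((T.S a).symm.toLinearMap ∘ₗ LinearMap.mulRight k (T.q a⁻¹))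
          LinearMap.id (T.Φ a⁻¹ a b))))

/-- `J^L_{α,β} = S_{α⁻¹}(y¹_{α⁻¹}) p_α y²_α ⊗ y³_β` where `Φ⁻¹_{α⁻¹,α,β} = y¹ ⊗ y² ⊗ y³` -/
noncomputable def JL (a b : π) : H a ⊗[k] H b :=
  TensorProduct.map (LinearMap.mul' k (H a)) LinearMap.id
    ((TensorProduct.assoc k (H a) (H a) (H b)).symm
      (TensorProduct.map
        (LinearMap.mulRight k (T.p a) ∘ₗ castL k H (inv_inv a) ∘ₗ (T.S a⁻¹).toLinearMap)
        LinearMap.id (T.Φinv a⁻¹ a b)))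

/-- the map `x ⊗ y ↦ Δ_{α,β}(x) ⬝ I^R_{α,β} ⬝ (1_α ⊗ S_{β⁻¹}(y))` -/
noncomputable def lmapIR (a b : π) : (H (a * b) ⊗[k] H b⁻¹) →ₗ[k] (H a ⊗[k] H b) :=
  LinearMap.mul' k (H a ⊗[k] H b) ∘ₗ
    TensorProduct.map
      (LinearMap.mulRight k (T.IR a b) ∘ₗ (T.Δ a b).toLinearMap)
      (TensorProduct.mk k (H a) (H b) 1 ∘ₗ castL k H (inv_inv b) ∘ₗ (T.S b⁻¹).toLinearMap)

/-- the map `x ⊗ y ↦ (1_α ⊗ S_β⁻¹(y)) ⬝ J^R_{α,β} ⬝ Δ_{α,β}(x)` -/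
noncomputable def lmapJR (a b : π) : (H (a * b) ⊗[k] H b⁻¹) →ₗ[k] (H a ⊗[k] H b) :=
  LinearMap.mul' k (H a ⊗[k] H b) ∘ₗ
    TensorProduct.map
      (TensorProduct.mk k (H a) (H b) 1 ∘ₗ (T.S b).symm.toLinearMap)
      (LinearMap.mulLeft k (T.JR a b) ∘ₗ (T.Δ a b).toLinearMap) ∘ₗ
    (TensorProduct.comm k (H (a * b)) (H b⁻¹)).toLinearMap

/-- the map `x ⊗ y ↦ Δ_{α,β}(y) ⬝ I^L_{α,β} ⬝ (S_α⁻¹(x) ⊗ 1_β)` -/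
noncomputable def lmapIL (a b : π) : (H a⁻¹ ⊗[k] H (a * b)) →ₗ[k] (H a ⊗[k] H b) :=
  LinearMap.mul' k (H a ⊗[k] H b) ∘ₗ
    TensorProduct.map
      (LinearMap.mulRight k (T.IL a b) ∘ₗ (T.Δ a b).toLinearMap)
      ((TensorProduct.mk k (H a) (H b)).flip 1 ∘ₗ (T.S a).symm.toLinearMap) ∘ₗ
    (TensorProduct.comm k (H a⁻¹) (H (a * b))).toLinearMap

/-- the map `x ⊗ y ↦ (S_{α⁻¹}(x) ⊗ 1_β) ⬝ J^L_{α,β} ⬝ Δ_{α,β}(y)` -/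
noncomputable def lmapJL (a b : π) : (H a⁻¹ ⊗[k] H (a * b)) →ₗ[k] (H a ⊗[k] H b) :=
  LinearMap.mul' k (H a ⊗[k] H b) ∘ₗ
    TensorProduct.map
      ((TensorProduct.mk k (H a) (H b)).flip 1 ∘ₗ
        castL k H (inv_inv a) ∘ₗ (T.S a⁻¹).toLinearMap)
      (LinearMap.mulLeft k (T.JL a b) ∘ₗ (T.Δ a b).toLinearMap)

end QuasiHopfGCoalgebra
end QH

/-!
With `K(u ⊗ v) = u q_β S_{β⁻¹}(v)` one has `I^R_{α,β} = (id ⊗ K)(Φ⁻¹_{α,β,β⁻¹})`, so the left-hand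
side is `(id ⊗ K)((Δ ⊗ id)Δ(h) ⬝ Φ⁻¹)`. Quasi-coassociativity moves `Φ⁻¹` to the left, giving
`(id ⊗ K)(Φ⁻¹ ⬝ (id ⊗ Δ)Δ(h))`; the antipode axiom `K(Δ(g)) = ε(g) q_β` collapses the last two
legs, and the counit axiom turns what is left into `I^R_{α,β} ⬝ (h ⊗ 1)`.
-/

section Cast
variable {k : Type u} [Field k] {π : Type v}
variable {H : π → Type u} [∀ a, Ring (H a)] [∀ a, Algebra k (H a)]

lemma castL_rfl {a : π} (e : a = a) : castL k H e = LinearMap.id := rfl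

lemma castL_castL {a b c : π} (e : a = b) (e' : b = c) (x : H a) :
    castL k H e' (castL k H e x) = castL k H (e.trans e') x := by
  subst e e'; rfl

lemma castL_mul {a b : π} (e : a = b) (x y : H a) :
    castL k H e (x * y) = castL k H e x * castL k H e y := by
  subst e; rfl

end Cast

namespace QuasiHopfGCoalgebra
variable {k : Type u} [Field k] {π : Type v} [Group π]
variable {H : π → Type u} [∀ a, Ring (H a)] [∀ a, Algebra k (H a)]
variable (T : QuasiHopfGCoalgebra k H)

def ΦUnit (a b c : π) : (H a ⊗[k] (H b ⊗[k] H c))ˣ :=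
  ⟨T.Φ a b c, T.Φinv a b c, T.Φ_mul_Φinv a b c, T.Φinv_mul_Φ a b c⟩

lemma Φinv_mul_coassoc (a b c : π) (h : H (a * b * c)) :
    T.Φinv a b c *
        (TensorProduct.map LinearMap.id (T.Δ b c).toLinearMap)
          ((T.Δ a (b * c)) (castL k H (mul_assoc a b c) h))
      = (TensorProduct.assoc k (H a) (H b) (H c))
          ((TensorProduct.map (T.Δ a b).toLinearMap LinearMap.id) ((T.Δ (a * b) c) h))
        * T.Φinv a b c :=
  SemiconjBy.units_inv_symm_left (a := T.ΦUnit a b c) (T.coassoc a b c h).symm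

lemma counit_right_castL (a : π) {c : π} (e : c = 1) (e' : a = a * c) (h : H a) :
    (TensorProduct.rid k (H a))
      (TensorProduct.map LinearMap.id (T.ε.toLinearMap ∘ₗ castL k H e)
        ((T.Δ a c) (castL k H e' h))) = h := by
  subst e
  exact T.counit_right a h

noncomputable def antipodeOfInv (b : π) : H b⁻¹ →ₗ[k] H b :=
  castL k H (inv_inv b) ∘ₗ (T.S b⁻¹).toLinearMap

lemma antipodeOfInv_mul (b : π) (x y : H b⁻¹) :
    T.antipodeOfInv b (x * y) = T.antipodeOfInv b y * T.antipodeOfInv b x := by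
  simp only [antipodeOfInv, LinearMap.comp_apply, LinearEquiv.coe_coe, T.S_mul, castL_mul]

/-- `I^R_{α,β} = (id ⊗ qContract β) Φ⁻¹_{α,β,β⁻¹}`. -/
noncomputable def qContract (b : π) : H b ⊗[k] H b⁻¹ →ₗ[k] H b :=
  LinearMap.mul' k (H b) ∘ₗ
    TensorProduct.map (LinearMap.mulRight k (T.q b)) (T.antipodeOfInv b)

lemma qContract_tmul (b : π) (v : H b) (y : H b⁻¹) :
    T.qContract b (v ⊗ₜ[k] y) = v * T.q b * T.antipodeOfInv b y := rfl

lemma qContract_tmul_mul (b : π) (v : H b) (y : H b⁻¹) (w : H b ⊗[k] H b⁻¹) :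
    T.qContract b ((v ⊗ₜ[k] y) * w) = v * T.qContract b w * T.antipodeOfInv b y := by
  induction w using TensorProduct.induction_on with
  | zero => simp
  | tmul v' y' =>
    simp only [Algebra.TensorProduct.tmul_mul_tmul, qContract_tmul, antipodeOfInv_mul]
    noncomm_ring
  | add w₁ w₂ ih₁ ih₂ => simp only [mul_add, map_add, ih₁, ih₂, add_mul]

lemma qContract_mul_Δ (b : π) (s : H b ⊗[k] H b⁻¹) (g : H 1) :
    T.qContract b (s * (T.Δ b b⁻¹) (castL k H (mul_inv_cancel b).symm g))
      = T.ε g • T.qContract b s := by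
  induction s using TensorProduct.induction_on with
  | zero => simp
  | tmul v y =>
    have hq : T.qContract b ((T.Δ b b⁻¹) (castL k H (mul_inv_cancel b).symm g))
        = T.ε g • T.q b := T.antipode_q b g
    rw [qContract_tmul_mul, hq, qContract_tmul, mul_smul_comm, smul_mul_assoc]
  | add s₁ s₂ ih₁ ih₂ => simp only [add_mul, map_add, ih₁, ih₂, smul_add]

lemma map_qContract_tmul_mul (a b : π) (u : H a) (v : H b) (y : H b⁻¹)
    (t : H a ⊗[k] (H b ⊗[k] H b⁻¹)) :
    TensorProduct.map LinearMap.id (T.qContract b) ((u ⊗ₜ[k] (v ⊗ₜ[k] y)) * t)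
      = (u ⊗ₜ[k] v) * TensorProduct.map LinearMap.id (T.qContract b) t
          * ((1 : H a) ⊗ₜ[k] T.antipodeOfInv b y) := by
  induction t using TensorProduct.induction_on with
  | zero => simp
  | tmul x w =>
    simp only [Algebra.TensorProduct.tmul_mul_tmul, TensorProduct.map_tmul, LinearMap.id_coe,
      id_eq, qContract_tmul_mul, mul_one]
  | add t₁ t₂ ih₁ ih₂ => simp only [mul_add, map_add, ih₁, ih₂, add_mul]

lemma map_qContract_assoc_tmul_mul (a b : π) (z : H a ⊗[k] H b) (y : H b⁻¹)
    (t : H a ⊗[k] (H b ⊗[k] H b⁻¹)) :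
    TensorProduct.map LinearMap.id (T.qContract b)
        ((TensorProduct.assoc k (H a) (H b) (H b⁻¹)) (z ⊗ₜ[k] y) * t)
      = z * TensorProduct.map LinearMap.id (T.qContract b) t
          * ((1 : H a) ⊗ₜ[k] T.antipodeOfInv b y) := by
  induction z using TensorProduct.induction_on with
  | zero => simp
  | tmul u v => rw [TensorProduct.assoc_tmul, map_qContract_tmul_mul]
  | add z₁ z₂ ih₁ ih₂ => simp only [TensorProduct.add_tmul, map_add, add_mul, ih₁, ih₂]

lemma lmapIR_eq_map_qContract (a b : π) (t : H (a * b) ⊗[k] H b⁻¹) :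
    T.lmapIR a b t
      = TensorProduct.map LinearMap.id (T.qContract b)
          ((TensorProduct.assoc k (H a) (H b) (H b⁻¹))
              (TensorProduct.map (T.Δ a b).toLinearMap LinearMap.id t)
            * T.Φinv a b b⁻¹) := by
  induction t using TensorProduct.induction_on with
  | zero => simp
  | tmul x y =>
    rw [TensorProduct.map_tmul, map_qContract_assoc_tmul_mul]
    rfl
  | add t₁ t₂ ih₁ ih₂ => simp only [map_add, add_mul, ih₁, ih₂]

lemma map_qContract_mul_tmul_Δ (a b : π) (t : H a ⊗[k] (H b ⊗[k] H b⁻¹)) (x : H a)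
    (g : H 1) :
    TensorProduct.map LinearMap.id (T.qContract b)
        (t * (x ⊗ₜ[k] (T.Δ b b⁻¹) (castL k H (mul_inv_cancel b).symm g)))
      = T.ε g • (TensorProduct.map LinearMap.id (T.qContract b) t * (x ⊗ₜ[k] (1 : H b))) := by
  induction t using TensorProduct.induction_on with
  | zero => simp
  | tmul u s =>
    simp only [Algebra.TensorProduct.tmul_mul_tmul, TensorProduct.map_tmul, LinearMap.id_coe,
      id_eq, qContract_mul_Δ, mul_one, TensorProduct.tmul_smul]
  | add t₁ t₂ ih₁ ih₂ => simp only [add_mul, map_add, ih₁, ih₂, smul_add]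

lemma map_qContract_Φinv_mul (a b : π) (D : H a ⊗[k] H (b * b⁻¹)) :
    TensorProduct.map LinearMap.id (T.qContract b)
        (T.Φinv a b b⁻¹ * (TensorProduct.map LinearMap.id (T.Δ b b⁻¹).toLinearMap) D)
      = T.IR a b *
          ((TensorProduct.rid k (H a))
            (TensorProduct.map LinearMap.id
              (T.ε.toLinearMap ∘ₗ castL k H (mul_inv_cancel b)) D) ⊗ₜ[k] (1 : H b)) := by
  induction D using TensorProduct.induction_on with
  | zero => simp
  | tmul x g =>
    have hg : g = castL k H (mul_inv_cancel b).symm (castL k H (mul_inv_cancel b) g) := by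
      rw [castL_castL, castL_rfl]; rfl
    rw [TensorProduct.map_tmul, AlgHom.toLinearMap_apply, hg, map_qContract_mul_tmul_Δ,
      ← hg, TensorProduct.map_tmul, TensorProduct.rid_tmul, ← mul_smul_comm,
      TensorProduct.smul_tmul']
    rfl
  | add D₁ D₂ ih₁ ih₂ => simp only [map_add, mul_add, ih₁, ih₂, TensorProduct.add_tmul]

end QuasiHopfGCoalgebra

section Statements
variable {k : Type u} [Field k] {π : Type v} [Group π]
variable {H : π → Type u} [∀ a, Ring (H a)] [∀ a, Algebra k (H a)]

/-- For all `h ∈ H_α`: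
`Δ_{α,β}(h₍₁,αβ₎) ⬝ I^R_{α,β} ⬝ (1_α ⊗ S_{β⁻¹}(h₍₂,β⁻¹₎)) = I^R_{α,β} ⬝ (h ⊗ 1_β)`
where `h₍₁,αβ₎ ⊗ h₍₂,β⁻¹₎ = Δ_{αβ,β⁻¹}(h)`. -/
theorem IR_absorb (T : QuasiHopfGCoalgebra k H) (a b : π) (h : H a) :
    T.lmapIR a b ((T.Δ (a * b) b⁻¹) (castL k H (mul_inv_cancel_right a b).symm h))
      = T.IR a b * (h ⊗ₜ[k] (1 : H b)) := by
  rw [T.lmapIR_eq_map_qContract, ← T.Φinv_mul_coassoc, T.map_qContract_Φinv_mul, castL_castL,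
    T.counit_right_castL]

end Statements
end

section
/- Let α, β ∈ π. For all a ∈ H_β one has Δ_{α,β}(a_{(2,αβ)}) · I^L_{α,β} · (S_α⁻¹(a_{(1,α⁻¹)}) ⊗ 1_β) = I^L_{α,β} · (1_α ⊗ a), where a_{(1,α⁻¹)} ⊗ a_{(2,αβ)} = Δ_{α⁻¹,αβ}(a). -/
open scoped TensorProduct
open TensorProduct

universe u v
set_option maxHeartbeats 1000000

/-!
Let `G = contractL a b : u ⊗ v ⊗ w ↦ v S_α⁻¹(u) ⊗ w`, so that
`I^L_{α,β} = G(Φ_{α⁻¹,α,β} (q_{α⁻¹} ⊗ 1 ⊗ 1))`. As `S_α⁻¹` is anti-multiplicative,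
`G((u ⊗ w) Ψ) = w G(Ψ) (S_α⁻¹(u) ⊗ 1)`, so the left-hand side is `G((id ⊗ Δ)Δ(a) Φ (q ⊗ 1 ⊗ 1))`.
Quasi-coassociativity moves `Φ` to the left, turning this into `G(Φ (Δ ⊗ id)Δ(a) (q ⊗ 1 ⊗ 1))`,
where `G` sees the first two legs of `(Δ ⊗ id)Δ(a)` only through `h₍₁₎ q S(h₍₂₎) = ε(h) q`;
the counit axiom then leaves `I^L_{α,β} (1 ⊗ a)`.
-/

lemma castL_castL_s2 {k : Type u} [Field k] {π : Type v} {H : π → Type u} [∀ a, Ring (H a)]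
    [∀ a, Algebra k (H a)] {c d e : π} (h₁ : c = d) (h₂ : d = e) (x : H c) :
    castL k H h₂ (castL k H h₁ x) = castL k H (h₁.trans h₂) x := by
  subst h₁ h₂; rfl

section Statements
variable {k : Type u} [Field k] {π : Type v} [Group π]
variable {H : π → Type u} [∀ a, Ring (H a)] [∀ a, Algebra k (H a)]

namespace QuasiHopfGCoalgebra

variable (T : QuasiHopfGCoalgebra k H)

lemma Δ_castL_left {c c' : π} (e : c = c') (d : π) (e' : c * d = c' * d) (h : H (c * d)) :
    T.Δ c' d (castL k H e' h) = map (castL k H e) LinearMap.id (T.Δ c d h) := by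
  subst e
  exact (LinearMap.congr_fun TensorProduct.map_id (T.Δ c d h)).symm

lemma S_symm_mul (c : π) (x y : H c⁻¹) :
    (T.S c).symm (x * y) = (T.S c).symm y * (T.S c).symm x :=
  (T.S c).injective (by simp [T.S_mul])

lemma antipode_q_inv (c : π) (h : H 1) :
    (LinearMap.mul' k (H c⁻¹) ∘ₗ map (LinearMap.mulRight k (T.q c⁻¹)) (T.S c).toLinearMap)
      (T.Δ c⁻¹ c (castL k H (inv_mul_cancel c).symm h)) = T.ε h • T.q c⁻¹ := by
  -- `antipode_q` at `c⁻¹` is this statement with `c⁻¹⁻¹` in place of `c`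
  have general : ∀ d (e : c⁻¹⁻¹ = d),
      (LinearMap.mul' k (H c⁻¹) ∘ₗ map (LinearMap.mulRight k (T.q c⁻¹))
        (castL k H (by rw [← e, inv_inv]) ∘ₗ (T.S d).toLinearMap))
        (T.Δ c⁻¹ d (castL k H (by rw [← e, mul_inv_cancel]) h)) = T.ε h • T.q c⁻¹ := by
    rintro d rfl
    exact T.antipode_q c⁻¹ h
  exact general c (inv_inv c)

variable (a b : π)

noncomputable def contractL : H a⁻¹ ⊗[k] (H a ⊗[k] H b) →ₗ[k] H a ⊗[k] H b :=
  map (LinearMap.mul' k (H a)) LinearMap.id ∘ₗ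
    (TensorProduct.assoc k (H a) (H a) (H b)).symm.toLinearMap ∘ₗ
    (TensorProduct.leftComm k (H a) (H a) (H b)).toLinearMap ∘ₗ
    map (T.S a).symm.toLinearMap LinearMap.id

@[simp] lemma contractL_tmul (u : H a⁻¹) (v : H a) (w : H b) :
    T.contractL a b (u ⊗ₜ (v ⊗ₜ w)) = (v * (T.S a).symm u) ⊗ₜ w := by
  simp [contractL]

lemma IL_eq_contractL : T.IL a b = T.contractL a b (T.Φ a⁻¹ a b * (T.q a⁻¹ ⊗ₜ 1)) := by
  have h : map (LinearMap.mul' k (H a)) LinearMap.id ∘ₗ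
      (TensorProduct.assoc k (H a) (H a) (H b)).symm.toLinearMap ∘ₗ
      (TensorProduct.leftComm k (H a) (H a) (H b)).toLinearMap ∘ₗ
      map ((T.S a).symm.toLinearMap ∘ₗ LinearMap.mulRight k (T.q a⁻¹)) LinearMap.id
      = T.contractL a b ∘ₗ LinearMap.mulRight k (T.q a⁻¹ ⊗ₜ (1 : H a ⊗[k] H b)) :=
    ext_threefold' fun u v w => by simp
  exact LinearMap.congr_fun h (T.Φ a⁻¹ a b)

lemma contractL_one_tmul_mul (w : H a ⊗[k] H b) (Ψ : H a⁻¹ ⊗[k] (H a ⊗[k] H b)) :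
    T.contractL a b ((1 ⊗ₜ w) * Ψ) = w * T.contractL a b Ψ := by
  induction w using TensorProduct.induction_on with
  | zero => simp
  | add w w' hw hw' => simp only [tmul_add, add_mul, map_add, hw, hw']
  | tmul w₁ w₂ =>
    have h : T.contractL a b ∘ₗ LinearMap.mulLeft k (1 ⊗ₜ (w₁ ⊗ₜ w₂))
        = LinearMap.mulLeft k (w₁ ⊗ₜ w₂) ∘ₗ T.contractL a b :=
      ext_threefold' fun u v w => by simp [mul_assoc]
    exact LinearMap.congr_fun h Ψ

lemma contractL_tmul_one_mul (u : H a⁻¹) (Ψ : H a⁻¹ ⊗[k] (H a ⊗[k] H b)) :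
    T.contractL a b ((u ⊗ₜ 1) * Ψ) = T.contractL a b Ψ * ((T.S a).symm u ⊗ₜ 1) := by
  have h : T.contractL a b ∘ₗ LinearMap.mulLeft k (u ⊗ₜ (1 : H a ⊗[k] H b))
      = LinearMap.mulRight k ((T.S a).symm u ⊗ₜ (1 : H b)) ∘ₗ T.contractL a b :=
    ext_threefold' fun u' v w => by simp [S_symm_mul, mul_assoc]
  exact LinearMap.congr_fun h Ψ

lemma lmapIL_eq_contractL (t : H a⁻¹ ⊗[k] H (a * b)) :
    T.lmapIL a b t
      = T.contractL a b
          (map LinearMap.id (T.Δ a b).toLinearMap t * T.Φ a⁻¹ a b * (T.q a⁻¹ ⊗ₜ 1)) := by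
  induction t using TensorProduct.induction_on with
  | zero => simp
  | add t t' ht ht' => simp only [map_add, add_mul, ht, ht']
  | tmul u v =>
    have hu : u ⊗ₜ[k] T.Δ a b v = (1 ⊗ₜ T.Δ a b v) * (u ⊗ₜ 1) := by simp
    calc T.lmapIL a b (u ⊗ₜ v) = T.Δ a b v * T.IL a b * ((T.S a).symm u ⊗ₜ 1) := by
          simp [lmapIL]
      _ = _ := by
          rw [IL_eq_contractL, map_tmul, LinearMap.id_apply, AlgHom.toLinearMap_apply, hu]
          simp only [mul_assoc]
          rw [contractL_one_tmul_mul, contractL_tmul_one_mul]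

lemma contractL_mul_assoc_tmul (z : H a⁻¹) (Ψ : H a⁻¹ ⊗[k] (H a ⊗[k] H b))
    (t : H a⁻¹ ⊗[k] H a) (w : H b) :
    T.contractL a b (Ψ * TensorProduct.assoc k (H a⁻¹) (H a) (H b) (t ⊗ₜ w) * (z ⊗ₜ 1))
      = T.contractL a b (Ψ * ((LinearMap.mul' k (H a⁻¹) ∘ₗ
          map (LinearMap.mulRight k z) (T.S a).toLinearMap) t ⊗ₜ 1)) * (1 ⊗ₜ w) := by
  induction t using TensorProduct.induction_on with
  | zero => simp
  | add t t' ht ht' => simp only [add_tmul, map_add, mul_add, add_mul, ht, ht']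
  | tmul c d =>
    have h : T.contractL a b ∘ₗ LinearMap.mulRight k (z ⊗ₜ (1 : H a ⊗[k] H b)) ∘ₗ
          LinearMap.mulRight k (c ⊗ₜ (d ⊗ₜ w))
        = LinearMap.mulRight k ((1 : H a) ⊗ₜ w) ∘ₗ T.contractL a b ∘ₗ
          LinearMap.mulRight k ((c * z * T.S a d) ⊗ₜ (1 : H a ⊗[k] H b)) :=
      ext_threefold' fun u v w => by simp [S_symm_mul, mul_assoc]
    simpa using LinearMap.congr_fun h Ψ

lemma contractL_counit (s : H 1 ⊗[k] H b) :
    T.contractL a b (T.Φ a⁻¹ a b * TensorProduct.assoc k (H a⁻¹) (H a) (H b)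
        (map (T.Δ a⁻¹ a).toLinearMap LinearMap.id
          (map (castL k H (inv_mul_cancel a).symm) LinearMap.id s)) * (T.q a⁻¹ ⊗ₜ 1))
      = T.IL a b * (1 ⊗ₜ TensorProduct.lid k (H b) (map (T.ε : H 1 →ₗ[k] k) LinearMap.id s)) := by
  induction s using TensorProduct.induction_on with
  | zero => simp
  | add s s' hs hs' => simp only [map_add, mul_add, add_mul, tmul_add, hs, hs']
  | tmul h w =>
    simp only [map_tmul, LinearMap.id_apply, AlgHom.toLinearMap_apply, lid_tmul]
    rw [contractL_mul_assoc_tmul, antipode_q_inv, ← smul_tmul', mul_smul_comm, map_smul,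
      smul_mul_assoc, IL_eq_contractL, tmul_smul, mul_smul_comm]
    rfl

end QuasiHopfGCoalgebra

/-- For all `a ∈ H_β`:
`Δ_{α,β}(a₍₂,αβ₎) ⬝ I^L_{α,β} ⬝ (S_α⁻¹(a₍₁,α⁻¹₎) ⊗ 1_β) = I^L_{α,β} ⬝ (1_α ⊗ a)`
where `a₍₁,α⁻¹₎ ⊗ a₍₂,αβ₎ = Δ_{α⁻¹,αβ}(a)`. -/
theorem IL_absorb (T : QuasiHopfGCoalgebra k H) (a b : π) (x : H b) :
    T.lmapIL a b ((T.Δ a⁻¹ (a * b)) (castL k H (inv_mul_cancel_left a b).symm x))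
      = T.IL a b * ((1 : H a) ⊗ₜ[k] x) := by
  have hx : castL k H (inv_mul_cancel_left a b).symm x
      = castL k H (mul_assoc a⁻¹ a b)
          (castL k H (by rw [inv_mul_cancel]) (castL k H (one_mul b).symm x)) := by
    simp only [castL_castL_s2]
  rw [T.lmapIL_eq_contractL, hx, T.coassoc, T.Δ_castL_left (inv_mul_cancel a).symm,
    T.contractL_counit, T.counit_left]

end Statements
end

section
/- Let H be a quasi-Turaev π-coalgebra, α ∈ π, and let V be a left H_α-module equipped with a half-braiding c_{V,−}. Define ρ_{V,λ} : V → V ⊗ H_λ by ρ_{V,λ}(v) = c⁻¹_{V,H_λ}(^α1_λ ⊗ v), where H_λ is the left regular H_λ-module. Then ρ satisfies the quasi-coassociativity axiom (ii) of α-Yetter–Drinfeld modules: for all λ₁, λ₂ ∈ π and v ∈ V, (y²_α · v_{(0,0)})_{(0,0)} ⊗ (y²_α · v_{(0,0)})_{(1,λ₁)} y¹_{λ₁} ⊗ y³_{λ₂} v_{(1,λ₂)} = Φ⁻¹_{α,λ₁,λ₂} · [(ȳ³_α · v)_{(0,0)} ⊗ (ȳ³_α · v)_{(1,λ₁λ₂)(1,λ₁)}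 ȳ¹_{λ₁} ⊗ (ȳ³_α · v)_{(1,λ₁λ₂)(2,λ₂)} ȳ²_{λ₂}], where y¹ ⊗ y² ⊗ y³ = Φ⁻¹_{λ₁,α,λ₂} and ȳ¹ ⊗ ȳ² ⊗ ȳ³ = Φ⁻¹_{λ₁,λ₂,α}. -/
/-!
Write `c₁₂` for `c_{V,H_{λ₁} ⊗ H_{λ₂}}`. Inverting the hexagon identity expresses `c₁₂⁻¹`
through `c⁻¹_{V,H_{λ₁}}`, `c⁻¹_{V,H_{λ₂}}` and associators. Naturality of `c⁻¹` with respect to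
`H_λ`-linear maps `g` out of the regular module gives `c⁻¹_{V,X}(g 1 ⊗ v) = v₍₀,₀₎ ⊗ g(v₍₁,λ₎)`.
Evaluating the inverted hexagon on `Φ⁻¹ · (1 ⊗ 1 ⊗ v)` therefore produces exactly the two sides
of the axiom, once the associators of the conjugate modules `^αH_λ` are identified with those of
`H_λ`: the crossing fixes `Φ`, and `φ_1 = id`.
-/

open scoped TensorProduct
open TensorProduct

universe u v
set_option maxHeartbeats 1000000

section QH
variable (k : Type u) [Field k] {π : Type v} [Group π]
variable (H : π → Type u) [∀ a, Ring (H a)] [∀ a, Algebra k (H a)]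

/-- A quasi-Turaev `π`-coalgebra: a quasi-Hopf `π`-coalgebra together with a crossing
`φ_β : H_α → H_{βαβ⁻¹}`. -/
structure QuasiTuraevGCoalgebra extends QuasiHopfGCoalgebra k H where
  /-- the crossing -/
  φ : ∀ b a : π, H a ≃ₐ[k] H (b * a * b⁻¹)
  /-- the crossing preserves the comultiplication -/
  φ_comul : ∀ (b a c : π) (h : H (a * c)),
    TensorProduct.map (φ b a).toLinearMap (φ b c).toLinearMap ((Δ a c) h)
      = (Δ (b * a * b⁻¹) (b * c * b⁻¹))
          (castL k H (by group) ((φ b (a * c)) h))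
  /-- the crossing preserves the counit -/
  φ_counit : ∀ (b : π) (h : H 1),
    ε (castL k H (by group : b * 1 * b⁻¹ = 1) ((φ b 1) h)) = ε h
  /-- the crossing is multiplicative -/
  φ_mul : ∀ (b b' a : π) (h : H a),
    castL k H (by group : b * (b' * a * b'⁻¹) * b⁻¹ = (b * b') * a * (b * b')⁻¹)
        ((φ b (b' * a * b'⁻¹)) ((φ b' a) h))
      = (φ (b * b') a) h
  /-- the associator is invariant under the crossing -/
  φ_Φ : ∀ e t v a b c : π,
    TensorProduct.map (φ e a).toLinearMap
        (TensorProduct.map (φ t b).toLinearMap (φ v c).toLinearMap) (Φ a b c)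
      = Φ (e * a * e⁻¹) (t * b * t⁻¹) (v * c * v⁻¹)

end QH

section PMapComb
/- Combinators for "parameterized linear maps" `A →ₗ[k] (M →ₗ[k] N)`: these let us build
multilinear expressions compositionally. -/
variable {k : Type u} [Field k]
variable {A B M N M' N' P Q : Type u}
variable [AddCommGroup A] [Module k A] [AddCommGroup B] [Module k B]
variable [AddCommGroup M] [Module k M] [AddCommGroup N] [Module k N]
variable [AddCommGroup M'] [Module k M'] [AddCommGroup N'] [Module k N']
variable [AddCommGroup P] [Module k P] [AddCommGroup Q] [Module k Q]

/-- tensor product of parameterized maps -/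
noncomputable def pmapTens (f : A →ₗ[k] M →ₗ[k] N) (g : B →ₗ[k] M' →ₗ[k] N') :
    (A ⊗[k] B) →ₗ[k] (M ⊗[k] M') →ₗ[k] (N ⊗[k] N') :=
  TensorProduct.homTensorHomMap (RingHom.id k) M M' N N' ∘ₗ TensorProduct.map f g

/-- composition of parameterized maps: `(pcomp f g) (a ⊗ b) = g b ∘ₗ f a` -/
noncomputable def pcomp (f : A →ₗ[k] M →ₗ[k] N) (g : B →ₗ[k] N →ₗ[k] P) :
    (A ⊗[k] B) →ₗ[k] M →ₗ[k] P :=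
  TensorProduct.lift
    ((LinearMap.lcomp k (M →ₗ[k] P) g) ∘ₗ (LinearMap.llcomp k M N P).flip ∘ₗ f)

/-- postcompose a parameterized map with a fixed map -/
noncomputable def ppost (h : N →ₗ[k] P) (f : A →ₗ[k] M →ₗ[k] N) : A →ₗ[k] M →ₗ[k] P :=
  (LinearMap.llcomp k M N P h) ∘ₗ f

/-- precompose a parameterized map with a fixed map -/
noncomputable def ppre (h : P →ₗ[k] M) (f : A →ₗ[k] M →ₗ[k] N) : A →ₗ[k] P →ₗ[k] N :=
  (LinearMap.lcomp k N h) ∘ₗ f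

/-- reparameterize -/
noncomputable def pparam (σ : B →ₗ[k] A) (f : A →ₗ[k] M →ₗ[k] N) : B →ₗ[k] M →ₗ[k] N :=
  f ∘ₗ σ

/-- act on the left tensor factor -/
noncomputable def pleft (P : Type u) [AddCommGroup P] [Module k P]
    (f : A →ₗ[k] M →ₗ[k] N) : A →ₗ[k] (M ⊗[k] P) →ₗ[k] (N ⊗[k] P) :=
  (LinearMap.rTensorHom P) ∘ₗ f

/-- act on the right tensor factor -/
noncomputable def pright (P : Type u) [AddCommGroup P] [Module k P]
    (f : A →ₗ[k] M →ₗ[k] N) : A →ₗ[k] (P ⊗[k] M) →ₗ[k] (P ⊗[k] N) :=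
  (LinearMap.lTensorHom P) ∘ₗ f

end PMapComb

section Modules
variable {k : Type u} [Field k] {π : Type v} [Group π]
variable {H : π → Type u} [∀ a, Ring (H a)] [∀ a, Algebra k (H a)]
variable (T : QuasiTuraevGCoalgebra k H)

namespace QuasiTuraevGCoalgebra

/-- The `H_{αβ}`-module structure on the tensor product of an `H_α`-module and an
`H_β`-module, through `Δ_{α,β}`. -/
noncomputable def tensAlg {a b : π} {M N : Type u}
    [AddCommGroup M] [Module k M] [AddCommGroup N] [Module k N]
    (ρ : H a →ₐ[k] Module.End k M) (σ : H b →ₐ[k] Module.End k N) :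
    H (a * b) →ₐ[k] Module.End k (M ⊗[k] N) :=
  ((Module.endTensorEndAlgHom (R := k) (S := k) (A := k) (M := M) (N := N)).comp
      (Algebra.TensorProduct.map ρ σ)).comp (T.Δ a b)

/-- The conjugate module `^βX`: `X` with the `H_{βαβ⁻¹}`-action `h · x = φ_{β⁻¹}(h) · x`. -/
noncomputable def conjAlg {a : π} {X : Type u} [AddCommGroup X] [Module k X]
    (ρ : H a →ₐ[k] Module.End k X) (b : π) :
    H (b * a * b⁻¹) →ₐ[k] Module.End k X :=
  (ρ.comp (castA k H (by group : b⁻¹ * (b * a * b⁻¹) * b⁻¹⁻¹ = a))).comp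
    (T.φ b⁻¹ (b * a * b⁻¹)).toAlgHom

/-- Evaluation of an action: `H_α ⊗ X → X`. -/
noncomputable def aev {a : π} {X : Type u} [AddCommGroup X] [Module k X]
    (ρ : H a →ₐ[k] Module.End k X) : (H a ⊗[k] X) →ₗ[k] X :=
  TensorProduct.lift ρ.toLinearMap

/-- The associativity constraint of `Rep(H)`: multiplication by `Φ_{α,β,γ}` composed with
the canonical vector space isomorphism. -/
noncomputable def assocMod {a b c : π} {M₁ M₂ M₃ : Type u}
    [AddCommGroup M₁] [Module k M₁] [AddCommGroup M₂] [Module k M₂]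
    [AddCommGroup M₃] [Module k M₃]
    (ρ₁ : H a →ₐ[k] Module.End k M₁) (ρ₂ : H b →ₐ[k] Module.End k M₂)
    (ρ₃ : H c →ₐ[k] Module.End k M₃) :
    ((M₁ ⊗[k] M₂) ⊗[k] M₃) →ₗ[k] (M₁ ⊗[k] (M₂ ⊗[k] M₃)) :=
  (pmapTens ρ₁.toLinearMap (pmapTens ρ₂.toLinearMap ρ₃.toLinearMap) (T.Φ a b c)) ∘ₗ
    (TensorProduct.assoc k M₁ M₂ M₃).toLinearMap

/-- The inverse associativity constraint of `Rep(H)`. -/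
noncomputable def assocModInv {a b c : π} {M₁ M₂ M₃ : Type u}
    [AddCommGroup M₁] [Module k M₁] [AddCommGroup M₂] [Module k M₂]
    [AddCommGroup M₃] [Module k M₃]
    (ρ₁ : H a →ₐ[k] Module.End k M₁) (ρ₂ : H b →ₐ[k] Module.End k M₂)
    (ρ₃ : H c →ₐ[k] Module.End k M₃) :
    (M₁ ⊗[k] (M₂ ⊗[k] M₃)) →ₗ[k] ((M₁ ⊗[k] M₂) ⊗[k] M₃) :=
  (TensorProduct.assoc k M₁ M₂ M₃).symm.toLinearMap ∘ₗ
    (pmapTens ρ₁.toLinearMap (pmapTens ρ₂.toLinearMap ρ₃.toLinearMap) (T.Φinv a b c))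

end QuasiTuraevGCoalgebra
end Modules

section YD
variable {k : Type u} [Field k] {π : Type v} [Group π]
variable {H : π → Type u} [∀ a, Ring (H a)] [∀ a, Algebra k (H a)]

namespace QuasiTuraevGCoalgebra
variable (T : QuasiTuraevGCoalgebra k H)
variable {a : π} {V : Type u} [AddCommGroup V] [Module k V]

/-- Counitarity `(id ⊗ ε) ∘ ρ_{V,1} = id` of a coaction family. -/
def ydCounitProp (coact : ∀ l : π, V →ₗ[k] V ⊗[k] H l) : Prop :=
  ∀ v : V,
    (TensorProduct.rid k V)
      ((TensorProduct.map LinearMap.id (T.ε : H 1 →ₗ[k] k)) (coact 1 v)) = v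

/-- The left-hand side of the Yetter-Drinfeld quasi-coassociativity axiom, as a linear map:
`v ↦ (y²_α·v₍₀,₀₎)₍₀,₀₎ ⊗ ((y²_α·v₍₀,₀₎)₍₁,λ₁₎ y¹_{λ₁} ⊗ y³_{λ₂} v₍₁,λ₂₎)`
where `y¹ ⊗ y² ⊗ y³ = Φ⁻¹_{λ₁,α,λ₂}`. -/
noncomputable def ydCoassocLHS (ρ : H a →ₐ[k] Module.End k V)
    (coact : ∀ l : π, V →ₗ[k] V ⊗[k] H l) (l₁ l₂ : π) :
    V →ₗ[k] V ⊗[k] (H l₁ ⊗[k] H l₂) :=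
  (TensorProduct.assoc k V (H l₁) (H l₂)).toLinearMap ∘ₗ
    ((pparam
        ((TensorProduct.assoc k (H a) (H l₁) (H l₂)).symm.toLinearMap ∘ₗ
          (TensorProduct.leftComm k (H l₁) (H a) (H l₂)).toLinearMap)
        (pmapTens
          (pcomp ((LinearMap.llcomp k V V (V ⊗[k] H l₁) (coact l₁)) ∘ₗ ρ.toLinearMap)
            (pright V ((LinearMap.mul k (H l₁)).flip)))
          (LinearMap.mul k (H l₂))))
      (T.Φinv l₁ a l₂)) ∘ₗ
    coact l₂

/-- The right-hand side of the Yetter-Drinfeld quasi-coassociativity axiom, as a linear map: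
`v ↦ Φ⁻¹_{α,λ₁,λ₂} ⬝ [(ȳ³_α·v)₍₀,₀₎ ⊗ ((ȳ³_α·v)₍₁,λ₁λ₂₎₍₁,λ₁₎ ȳ¹_{λ₁} ⊗ (ȳ³_α·v)₍₁,λ₁λ₂₎₍₂,λ₂₎ ȳ²_{λ₂})]`
where `ȳ¹ ⊗ ȳ² ⊗ ȳ³ = Φ⁻¹_{λ₁,λ₂,α}`. -/
noncomputable def ydCoassocRHS (ρ : H a →ₐ[k] Module.End k V)
    (coact : ∀ l : π, V →ₗ[k] V ⊗[k] H l) (l₁ l₂ : π) :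
    V →ₗ[k] V ⊗[k] (H l₁ ⊗[k] H l₂) :=
  ((pmapTens ρ.toLinearMap
      (pmapTens (Algebra.lmul k (H l₁)).toLinearMap (Algebra.lmul k (H l₂)).toLinearMap))
    (T.Φinv a l₁ l₂)) ∘ₗ
  ((pparam
      ((LinearMap.lTensor (H a) (TensorProduct.comm k (H l₂) (H l₁)).toLinearMap) ∘ₗ
        (TensorProduct.leftComm k (H l₂) (H a) (H l₁)).toLinearMap ∘ₗ
        (TensorProduct.assoc k (H l₂) (H a) (H l₁)).toLinearMap ∘ₗ
        (TensorProduct.comm k (H l₁) (H l₂ ⊗[k] H a)).toLinearMap)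
      (pcomp
        ((LinearMap.llcomp k V V (V ⊗[k] (H l₁ ⊗[k] H l₂))
            ((LinearMap.lTensor V (T.Δ l₁ l₂).toLinearMap) ∘ₗ coact (l₁ * l₂))) ∘ₗ
          ρ.toLinearMap)
        (pright V
          (pmapTens ((LinearMap.mul k (H l₁)).flip) ((LinearMap.mul k (H l₂)).flip)))))
    (T.Φinv l₁ l₂ a))

/-- The Yetter-Drinfeld quasi-coassociativity axiom. -/
def ydCoassocProp (ρ : H a →ₐ[k] Module.End k V)
    (coact : ∀ l : π, V →ₗ[k] V ⊗[k] H l) : Prop :=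
  ∀ l₁ l₂ : π, ydCoassocLHS T ρ coact l₁ l₂ = ydCoassocRHS T ρ coact l₁ l₂

/-- The right-hand side of the Yetter-Drinfeld compatibility axiom, as a map parameterized
by `Δ_{αβα⁻¹,α}(h)`: `(h₁ ⊗ h₂) ↦ (v ↦ (h₂·v)₍₀,₀₎ ⊗ (h₂·v)₍₁,β₎ φ_{α⁻¹}(h₁))`. -/
noncomputable def ydCompatRHS (ρ : H a →ₐ[k] Module.End k V)
    {b : π} (coactb : V →ₗ[k] V ⊗[k] H b) :
    (H (a * b * a⁻¹) ⊗[k] H a) →ₗ[k] V →ₗ[k] V ⊗[k] H b :=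
  pparam (TensorProduct.comm k (H (a * b * a⁻¹)) (H a)).toLinearMap
    (pcomp ((LinearMap.llcomp k V V (V ⊗[k] H b) coactb) ∘ₗ ρ.toLinearMap)
      (pright V
        ((LinearMap.mul k (H b)).flip ∘ₗ
          castL k H (by group : a⁻¹ * (a * b * a⁻¹) * a⁻¹⁻¹ = b) ∘ₗ
          (T.φ a⁻¹ (a * b * a⁻¹)).toLinearMap)))

/-- The Yetter-Drinfeld compatibility axiom:
`h₍₁,α₎·v₍₀,₀₎ ⊗ h₍₂,β₎ v₍₁,β₎ = (h₍₂,α₎·v)₍₀,₀₎ ⊗ (h₍₂,α₎·v)₍₁,β₎ φ_{α⁻¹}(h₍₁,αβα⁻¹₎)`. -/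
def ydCompatProp (ρ : H a →ₐ[k] Module.End k V)
    (coact : ∀ l : π, V →ₗ[k] V ⊗[k] H l) : Prop :=
  ∀ (b : π) (h : H (a * b)) (v : V),
    (T.tensAlg ρ (Algebra.lmul k (H b))) h (coact b v)
      = (ydCompatRHS T ρ (coact b))
          ((T.Δ (a * b * a⁻¹) a)
            (castA k H (by group : a * b = a * b * a⁻¹ * a) h)) v

/-- `V` is an `α`-Yetter-Drinfeld module over `T` (relative to the `H_α`-action `ρ` and
the coaction family `coact`). -/
def IsYD (ρ : H a →ₐ[k] Module.End k V)
    (coact : ∀ l : π, V →ₗ[k] V ⊗[k] H l) : Prop :=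
  ydCounitProp T coact ∧ ydCoassocProp T ρ coact ∧ ydCompatProp T ρ coact

end QuasiTuraevGCoalgebra
end YD

section Braid
variable {k : Type u} [Field k] {π : Type v} [Group π]
variable {H : π → Type u} [∀ a, Ring (H a)] [∀ a, Algebra k (H a)]

namespace QuasiTuraevGCoalgebra
variable (T : QuasiTuraevGCoalgebra k H)
variable {a : π} {V : Type u} [AddCommGroup V] [Module k V]

/-- For an `α`-Yetter-Drinfeld module `V` and a left `H_λ`-module `X`, the map
`ĉ_{V,X} : ^αX ⊗ V → V ⊗ X`, `x ⊗ v ↦ v₍₀,₀₎ ⊗ v₍₁,λ₎ · x`. -/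
noncomputable def ydBraidInv {l : π} {X : Type u} [AddCommGroup X] [Module k X]
    (coact : ∀ l : π, V →ₗ[k] V ⊗[k] H l) (ρX : H l →ₐ[k] Module.End k X) :
    (X ⊗[k] V) →ₗ[k] (V ⊗[k] X) :=
  (LinearMap.lTensor V (aev ρX)) ∘ₗ
    (TensorProduct.assoc k V (H l) X).toLinearMap ∘ₗ
    (LinearMap.rTensor X (coact l)) ∘ₗ
    (TensorProduct.comm k X V).toLinearMap

/-- For an `α`-Yetter-Drinfeld module `V` and a left `H_λ`-module `X`, the map
`c_{V,X} : V ⊗ X → ^αX ⊗ V` given by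
`v ⊗ x ↦ ^α[J¹₍₁,λ₎ y¹_λ S_{λ⁻¹}(J²_{λ⁻¹} y³_{λ⁻¹} (Ĩ²_α·v)₍₁,λ⁻¹₎ Ĩ¹_{λ⁻¹}) · x]
⊗ J¹₍₂,α₎ y²_α · (Ĩ²_α·v)₍₀,₀₎`, where `Ĩ¹ ⊗ Ĩ² = I^L_{λ⁻¹,α}`,
`J¹ ⊗ J² = J^R_{λα,λ⁻¹}` and `y¹ ⊗ y² ⊗ y³ = Φ⁻¹_{λ,α,λ⁻¹}`. -/
noncomputable def ydBraid {l : π} {X : Type u} [AddCommGroup X] [Module k X]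
    (ρV : H a →ₐ[k] Module.End k V) (coact : ∀ l : π, V →ₗ[k] V ⊗[k] H l)
    (ρX : H l →ₐ[k] Module.End k X) :
    (V ⊗[k] X) →ₗ[k] (X ⊗[k] V) :=
  ((pparam (TensorProduct.leftComm k (H l) (H a) (H l⁻¹)).toLinearMap
      (ppost (TensorProduct.comm k V X).toLinearMap
        (pmapTens ρV.toLinearMap
          (ppost (aev ρX)
            (pleft X
              (pparam (TensorProduct.comm k (H l) (H l⁻¹)).toLinearMap
                (pcomp
                  (ppost (castL k H (inv_inv l) ∘ₗ (T.S l⁻¹).toLinearMap)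
                    (LinearMap.mul k (H l⁻¹)))
                  (LinearMap.mul k (H l)))))))))
    (((TensorProduct.assoc k (H l) (H a) (H l⁻¹)).toLinearMap
        ((LinearMap.rTensor (H l⁻¹) (T.Δ l a).toLinearMap) (T.JR (l * a) l⁻¹))) *
      T.Φinv l a l⁻¹)) ∘ₗ
  (TensorProduct.assoc k V (H l⁻¹) X).toLinearMap ∘ₗ
  (LinearMap.rTensor X
    ((pparam (TensorProduct.comm k (H l⁻¹) (H a)).toLinearMap
        (pcomp ((LinearMap.llcomp k V V (V ⊗[k] H l⁻¹) (coact l⁻¹)) ∘ₗ ρV.toLinearMap)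
          (pright V ((LinearMap.mul k (H l⁻¹)).flip))))
      (T.IL l⁻¹ a)))

/-- The coaction of the conjugate Yetter-Drinfeld module `^βV`:
`ρ_{^βV,λ}(v) = v₍₀,₀₎ ⊗ φ_β(v₍₁,β⁻¹λβ₎)`. -/
noncomputable def conjCoact (coact : ∀ l : π, V →ₗ[k] V ⊗[k] H l) (b : π) :
    ∀ l : π, V →ₗ[k] V ⊗[k] H l :=
  fun l =>
    (LinearMap.lTensor V
      (castL k H (by group : b * (b⁻¹ * l * b) * b⁻¹ = l) ∘ₗ
        (T.φ b (b⁻¹ * l * b)).toLinearMap)) ∘ₗ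
    coact (b⁻¹ * l * b)

variable {b : π} {W : Type u} [AddCommGroup W] [Module k W]

/-- The coaction of the tensor product of an `α`-Yetter-Drinfeld module `V` and a
`β`-Yetter-Drinfeld module `W`:
`ρ_{V⊗W,λ}(v ⊗ w) = t¹_α Y¹_α · (y²_α·v)₍₀,₀₎ ⊗ t²_β · (Y³_β y³_β·w)₍₀,₀₎
  ⊗ t³_λ (Y³_β y³_β·w)₍₁,λ₎ Y²_λ φ_{β⁻¹}((y²_α·v)₍₁,βλβ⁻¹₎) y¹_λ`
where `t = Φ⁻¹_{α,β,λ}`, `Y = Φ_{α,λ,β}` and `y = Φ⁻¹_{λ,α,β}`. -/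
noncomputable def ydTensorCoact (ρV : H a →ₐ[k] Module.End k V)
    (coactV : ∀ l : π, V →ₗ[k] V ⊗[k] H l)
    (ρW : H b →ₐ[k] Module.End k W)
    (coactW : ∀ l : π, W →ₗ[k] W ⊗[k] H l) (l : π) :
    (V ⊗[k] W) →ₗ[k] (V ⊗[k] W) ⊗[k] H l :=
  (TensorProduct.assoc k V W (H l)).symm.toLinearMap ∘ₗ
  -- stage `t = Φ⁻¹_{α,β,λ}` : `t¹` acts on `V`, `t²` acts on `W`, `t³` multiplies on the left
  ((pmapTens ρV.toLinearMap (pmapTens ρW.toLinearMap (LinearMap.mul k (H l))))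
    (T.Φinv a b l)) ∘ₗ
  -- stage `Y = Φ_{α,λ,β}` : `Y¹` acts on `V`; `Y²` multiplies on the left; then `Y³` acts
  -- on `W`, the coaction `ρ_{W,λ}` is applied, and `(…·w)₍₁,λ₎` multiplies on the left
  ((pmapTens ρV.toLinearMap
      (pcomp (pright W (LinearMap.mul k (H l)))
        (ppost
          ((LinearMap.lTensor W (LinearMap.mul' k (H l))) ∘ₗ
            (TensorProduct.assoc k W (H l) (H l)).toLinearMap)
          (pleft (H l)
            ((LinearMap.llcomp k W W (W ⊗[k] H l) (coactW l)) ∘ₗ ρW.toLinearMap)))))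
    (T.Φ a l b)) ∘ₗ
  -- stage `y = Φ⁻¹_{λ,α,β}` : `y²` acts on `V` followed by `ρ_{V,βλβ⁻¹}`, whose second leg
  -- is pushed through `φ_{β⁻¹}` and multiplied on the left of `y¹`; `y³` acts on `W`
  ((pparam
      ((LinearMap.lTensor (H a) (TensorProduct.comm k (H l) (H b)).toLinearMap) ∘ₗ
        (TensorProduct.leftComm k (H l) (H a) (H b)).toLinearMap)
      (ppost
        ((LinearMap.lTensor V (LinearMap.lTensor W (LinearMap.mul' k (H l)))) ∘ₗ
          (LinearMap.lTensor V (TensorProduct.leftComm k (H l) W (H l)).toLinearMap) ∘ₗ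
          (TensorProduct.assoc k V (H l) (W ⊗[k] H l)).toLinearMap ∘ₗ
          (LinearMap.rTensor (W ⊗[k] H l)
            (LinearMap.lTensor V
              (castL k H (by group : b⁻¹ * (b * l * b⁻¹) * b⁻¹⁻¹ = l) ∘ₗ
                (T.φ b⁻¹ (b * l * b⁻¹)).toLinearMap))))
        (pmapTens
          ((LinearMap.llcomp k V V (V ⊗[k] H (b * l * b⁻¹)) (coactV (b * l * b⁻¹))) ∘ₗ
            ρV.toLinearMap)
          (ppre (TensorProduct.rid k W).symm.toLinearMap
            (pmapTens ρW.toLinearMap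
              ((LinearMap.ringLmapEquivSelf k k (H l)).symm.toLinearMap))))))
    (T.Φinv l a b))

end QuasiTuraevGCoalgebra
end Braid

section HB
variable {k : Type u} [Field k] {π : Type v} [Group π]
variable {H : π → Type u} [∀ a, Ring (H a)] [∀ a, Algebra k (H a)]
variable (T : QuasiTuraevGCoalgebra k H)

open QuasiTuraevGCoalgebra

/-- A half-braiding on a left `H_α`-module `V`: a natural family of `H_{αλ}`-linear
isomorphisms `c_{V,X} : V ⊗ X → ^αX ⊗ V` satisfying the hexagon identity. A pair
`(V, c_{V,-})` is an object of the `α`-th component `Z_α(Rep(H))` of the center of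
`Rep(H)`. -/
structure HalfBraiding (a : π) (V : Type u) [AddCommGroup V] [Module k V]
    (ρV : H a →ₐ[k] Module.End k V) where
  /-- the underlying `k`-linear isomorphisms `c_{V,X}` -/
  braid : ∀ (l : π) (X : Type u) [AddCommGroup X] [Module k X]
    (ρX : H l →ₐ[k] Module.End k X), (V ⊗[k] X) ≃ₗ[k] (X ⊗[k] V)
  /-- `c_{V,X}` is `H_{αλ}`-linear -/
  hlinear : ∀ (l : π) (X : Type u) [AddCommGroup X] [Module k X]
    (ρX : H l →ₐ[k] Module.End k X) (h : H (a * l)) (t : V ⊗[k] X),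
    braid l X ρX ((T.tensAlg ρV ρX h) t)
      = (T.tensAlg (T.conjAlg ρX a) ρV
          (castA k H (by group : a * l = a * l * a⁻¹ * a) h)) (braid l X ρX t)
  /-- `c_{V,-}` is natural -/
  hnatural : ∀ (l : π) (X X' : Type u) [AddCommGroup X] [Module k X]
    [AddCommGroup X'] [Module k X']
    (ρX : H l →ₐ[k] Module.End k X) (ρX' : H l →ₐ[k] Module.End k X')
    (g : X →ₗ[k] X'), (∀ (h : H l) (x : X), g (ρX h x) = ρX' h (g x)) →
    ∀ t : V ⊗[k] X,
      braid l X' ρX' ((LinearMap.lTensor V g) t)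
        = (LinearMap.rTensor V g) (braid l X ρX t)
  /-- the hexagon identity
  `c_{V,X₁⊗X₂} = a⁻¹_{^αX₁,^αX₂,V} ∘ (id ⊗ c_{V,X₂}) ∘ a_{^αX₁,V,X₂} ∘ (c_{V,X₁} ⊗ id) ∘ a⁻¹_{V,X₁,X₂}` -/
  hhexagon : ∀ (l₁ l₂ : π) (X₁ X₂ : Type u) [AddCommGroup X₁] [Module k X₁]
    [AddCommGroup X₂] [Module k X₂]
    (ρ₁ : H l₁ →ₐ[k] Module.End k X₁) (ρ₂ : H l₂ →ₐ[k] Module.End k X₂),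
    (braid (l₁ * l₂) (X₁ ⊗[k] X₂) (T.tensAlg ρ₁ ρ₂)).toLinearMap
      = T.assocModInv (T.conjAlg ρ₁ a) (T.conjAlg ρ₂ a) ρV ∘ₗ
        LinearMap.lTensor X₁ (braid l₂ X₂ ρ₂).toLinearMap ∘ₗ
        T.assocMod (T.conjAlg ρ₁ a) ρV ρ₂ ∘ₗ
        LinearMap.rTensor X₂ (braid l₁ X₁ ρ₁).toLinearMap ∘ₗ
        T.assocModInv ρV ρ₁ ρ₂

end HB

section HB2
variable {k : Type u} [Field k] {π : Type v} [Group π]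
variable {H : π → Type u} [∀ a, Ring (H a)] [∀ a, Algebra k (H a)]
variable {T : QuasiTuraevGCoalgebra k H}

/-- The coaction induced by a half-braiding: `ρ_{V,λ}(v) = c⁻¹_{V,H_λ}(^α1_λ ⊗ v)`. -/
noncomputable def HalfBraiding.coactOf {a : π} {V : Type u} [AddCommGroup V] [Module k V]
    {ρV : H a →ₐ[k] Module.End k V} (hb : HalfBraiding T a V ρV) :
    ∀ l : π, V →ₗ[k] V ⊗[k] H l :=
  fun l =>
    (hb.braid l (H l) (Algebra.lmul k (H l))).symm.toLinearMap ∘ₗ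
      TensorProduct.mk k (H l) V 1

end HB2


section Transport
variable {k : Type u} [Field k] {π : Type v}
variable {H : π → Type u} [∀ a, Ring (H a)] [∀ a, Algebra k (H a)]

theorem castL_heq {a b : π} (e : a = b) (x : H a) : HEq (castL k H e x) x := by
  subst e; rfl

theorem castA_heq {a b : π} (e : a = b) (x : H a) : HEq (castA k H e x) x := by
  subst e; rfl

theorem castA_injective {a b : π} (e : a = b) : Function.Injective (castA k H e) := by
  subst e; exact fun _ _ h => h

end Transport

section PMapTens
variable {k : Type u} [Field k]
variable {A A' B B' M N M' N' : Type u}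
variable [AddCommGroup A] [Module k A] [AddCommGroup B] [Module k B]
variable [AddCommGroup A'] [Module k A'] [AddCommGroup B'] [Module k B']
variable [AddCommGroup M] [Module k M] [AddCommGroup N] [Module k N]
variable [AddCommGroup M'] [Module k M'] [AddCommGroup N'] [Module k N']

theorem pmapTens_comp (f : A →ₗ[k] M →ₗ[k] N) (g : B →ₗ[k] M' →ₗ[k] N')
    (f' : A' →ₗ[k] A) (g' : B' →ₗ[k] B) :
    pmapTens (f ∘ₗ f') (g ∘ₗ g') = pmapTens f g ∘ₗ TensorProduct.map f' g' := by
  simp only [pmapTens, TensorProduct.map_comp, LinearMap.comp_assoc]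

theorem pmapTens_algHom {R S : Type u} [Ring R] [Algebra k R] [Ring S] [Algebra k S]
    (f : R →ₐ[k] Module.End k M) (g : S →ₐ[k] Module.End k N) :
    pmapTens f.toLinearMap g.toLinearMap
      = (Module.endTensorEndAlgHom.comp (Algebra.TensorProduct.map f g)).toLinearMap := by
  ext x y m n
  rfl

theorem pmapTens_apply_pmapTens_apply {R₁ R₂ R₃ M₁ M₂ M₃ : Type u}
    [Ring R₁] [Algebra k R₁] [Ring R₂] [Algebra k R₂] [Ring R₃] [Algebra k R₃]
    [AddCommGroup M₁] [Module k M₁] [AddCommGroup M₂] [Module k M₂]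
    [AddCommGroup M₃] [Module k M₃] (ρ₁ : R₁ →ₐ[k] Module.End k M₁)
    (ρ₂ : R₂ →ₐ[k] Module.End k M₂) (ρ₃ : R₃ →ₐ[k] Module.End k M₃)
    {s t : R₁ ⊗[k] (R₂ ⊗[k] R₃)} (hst : s * t = 1) (x : M₁ ⊗[k] (M₂ ⊗[k] M₃)) :
    pmapTens ρ₁.toLinearMap (pmapTens ρ₂.toLinearMap ρ₃.toLinearMap) s
      (pmapTens ρ₁.toLinearMap (pmapTens ρ₂.toLinearMap ρ₃.toLinearMap) t x) = x := by
  simp only [pmapTens_algHom, AlgHom.toLinearMap_apply]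
  rw [← Module.End.mul_apply, ← map_mul, hst, map_one, Module.End.one_apply]

end PMapTens

theorem LinearMap.mul_flip_eq_mulRight {k A : Type u} [Field k] [Ring A] [Algebra k A] (x : A) :
    (LinearMap.mul k A).flip x = LinearMap.mulRight k x :=
  rfl

theorem endTensorEndAlgHom_comp_map_lmul {k : Type u} [Field k] (A B : Type u)
    [Ring A] [Algebra k A] [Ring B] [Algebra k B] :
    Module.endTensorEndAlgHom.comp
        (Algebra.TensorProduct.map (Algebra.lmul k A) (Algebra.lmul k B))
      = Algebra.lmul k (A ⊗[k] B) := by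
  apply AlgHom.toLinearMap_injective
  ext x y z w
  simp [Module.endTensorEndAlgHom_apply]

namespace QuasiTuraevGCoalgebra
variable {k : Type u} [Field k] {π : Type v} [Group π]
variable {H : π → Type u} [∀ a, Ring (H a)] [∀ a, Algebra k (H a)]
variable (T : QuasiTuraevGCoalgebra k H)

theorem φ_heq {b b' c c' : π} (hb : b = b') (hc : c = c') {x : H c} {x' : H c'}
    (hx : HEq x x') : HEq (T.φ b c x) (T.φ b' c' x') := by
  subst hb hc hx; rfl

/-- `φ_1` is an injective idempotent, by `φ_mul`. -/
theorem castA_comp_φ_one (c : π) :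
    (castA k H (by group : (1 : π) * c * 1⁻¹ = c)).comp (T.φ 1 c).toAlgHom
      = AlgHom.id k (H c) := by
  set ψ := (castA k H (by group : (1 : π) * c * 1⁻¹ = c)).comp (T.φ 1 c).toAlgHom
  have hψ : Function.Injective ψ :=
    (castA_injective (k := k) _).comp (T.φ 1 c).injective
  have idem (x : H c) : ψ (ψ x) = ψ x := by
    refine eq_of_heq ((castA_heq _ _).trans ?_)
    refine (T.φ_heq rfl (by group) (castA_heq _ _)).trans ?_
    refine (castL_heq _ _).symm.trans ((heq_of_eq (T.φ_mul 1 1 c x)).trans ?_)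
    exact (T.φ_heq (mul_one 1) rfl HEq.rfl).trans (castA_heq _ _).symm
  exact AlgHom.ext fun x => hψ (idem x)

theorem φ_Φinv (e t v : π) {a b c a' b' c' : π} (ha : e * a * e⁻¹ = a')
    (hb : t * b * t⁻¹ = b') (hc : v * c * v⁻¹ = c') :
    TensorProduct.map ((castA k H ha).comp (T.φ e a).toAlgHom).toLinearMap
      (TensorProduct.map ((castA k H hb).comp (T.φ t b).toAlgHom).toLinearMap
        ((castA k H hc).comp (T.φ v c).toAlgHom).toLinearMap) (T.Φinv a b c)
      = T.Φinv a' b' c' := by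
  subst ha hb hc
  let M := Algebra.TensorProduct.map (T.φ e a).toAlgHom
    (Algebra.TensorProduct.map (T.φ t b).toAlgHom (T.φ v c).toAlgHom)
  have hΦ : M (T.Φ a b c) = T.Φ _ _ _ := T.φ_Φ e t v a b c
  change M (T.Φinv a b c) = _
  refine left_inv_eq_right_inv (a := M (T.Φ a b c)) ?_ ?_
  · rw [← map_mul, T.Φinv_mul_Φ, map_one]
  · rw [hΦ, T.Φ_mul_Φinv]

theorem tensAlg_lmul_apply (a b : π) (h : H (a * b)) (u : H a ⊗[k] H b) :
    T.tensAlg (Algebra.lmul k (H a)) (Algebra.lmul k (H b)) h u = T.Δ a b h * u := by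
  rw [tensAlg, AlgHom.comp_apply, endTensorEndAlgHom_comp_map_lmul]
  rfl

section Associator
variable {a b c : π} {M₁ M₂ M₃ : Type u}
  [AddCommGroup M₁] [Module k M₁] [AddCommGroup M₂] [Module k M₂]
  [AddCommGroup M₃] [Module k M₃]
  (ρ₁ : H a →ₐ[k] Module.End k M₁) (ρ₂ : H b →ₐ[k] Module.End k M₂)
  (ρ₃ : H c →ₐ[k] Module.End k M₃)

theorem pmapTens_Φinv_assocMod (x : (M₁ ⊗[k] M₂) ⊗[k] M₃) :
    pmapTens ρ₁.toLinearMap (pmapTens ρ₂.toLinearMap ρ₃.toLinearMap) (T.Φinv a b c)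
      (T.assocMod ρ₁ ρ₂ ρ₃ x) = TensorProduct.assoc k M₁ M₂ M₃ x :=
  pmapTens_apply_pmapTens_apply ρ₁ ρ₂ ρ₃ (T.Φinv_mul_Φ a b c) _

theorem assocMod_assocModInv (x : M₁ ⊗[k] (M₂ ⊗[k] M₃)) :
    T.assocMod ρ₁ ρ₂ ρ₃ (T.assocModInv ρ₁ ρ₂ ρ₃ x) = x := by
  simp only [assocMod, assocModInv, LinearMap.comp_apply, LinearEquiv.coe_coe,
    LinearEquiv.apply_symm_apply]
  exact pmapTens_apply_pmapTens_apply ρ₁ ρ₂ ρ₃ (T.Φ_mul_Φinv a b c) x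

theorem assocModInv_assocMod (x : (M₁ ⊗[k] M₂) ⊗[k] M₃) :
    T.assocModInv ρ₁ ρ₂ ρ₃ (T.assocMod ρ₁ ρ₂ ρ₃ x) = x := by
  rw [assocModInv, LinearMap.comp_apply, pmapTens_Φinv_assocMod, LinearEquiv.coe_coe,
    LinearEquiv.symm_apply_apply]

theorem assocModInv_comp_φ {a' b' c' : π} (e t v : π) (ha : e * a' * e⁻¹ = a)
    (hb : t * b' * t⁻¹ = b) (hc : v * c' * v⁻¹ = c) :
    T.assocModInv (ρ₁.comp ((castA k H ha).comp (T.φ e a').toAlgHom))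
        (ρ₂.comp ((castA k H hb).comp (T.φ t b').toAlgHom))
        (ρ₃.comp ((castA k H hc).comp (T.φ v c').toAlgHom))
      = T.assocModInv ρ₁ ρ₂ ρ₃ := by
  rw [assocModInv, assocModInv, ← T.φ_Φinv e t v ha hb hc, AlgHom.comp_toLinearMap (g := ρ₁),
    AlgHom.comp_toLinearMap (g := ρ₂), AlgHom.comp_toLinearMap (g := ρ₃), pmapTens_comp,
    pmapTens_comp, LinearMap.comp_apply]

theorem assocModInv_conjAlg_conjAlg (e : π) :
    T.assocModInv (T.conjAlg ρ₁ e) (T.conjAlg ρ₂ e) ρ₃ = T.assocModInv ρ₁ ρ₂ ρ₃ := by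
  have h := T.assocModInv_comp_φ ρ₁ ρ₂ ρ₃ (a' := e * a * e⁻¹) (b' := e * b * e⁻¹) (c' := c)
    e⁻¹ e⁻¹ 1 (by group) (by group) (by group)
  rwa [castA_comp_φ_one, AlgHom.comp_id] at h

theorem assocModInv_conjAlg (e : π) :
    T.assocModInv (T.conjAlg ρ₁ e) ρ₂ ρ₃ = T.assocModInv ρ₁ ρ₂ ρ₃ := by
  have h := T.assocModInv_comp_φ ρ₁ ρ₂ ρ₃ (a' := e * a * e⁻¹) (b' := b) (c' := c)
    e⁻¹ 1 1 (by group) (by group) (by group)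
  rwa [castA_comp_φ_one, castA_comp_φ_one, AlgHom.comp_id, AlgHom.comp_id] at h

end Associator

end QuasiTuraevGCoalgebra

namespace HalfBraiding
variable {k : Type u} [Field k] {π : Type v} [Group π]
variable {H : π → Type u} [∀ a, Ring (H a)] [∀ a, Algebra k (H a)]
variable {T : QuasiTuraevGCoalgebra k H} {a : π} {V : Type u} [AddCommGroup V] [Module k V]
  {ρV : H a →ₐ[k] Module.End k V} (hb : HalfBraiding T a V ρV)
open QuasiTuraevGCoalgebra

theorem braid_coactOf (l : π) (v : V) :
    hb.braid l (H l) (Algebra.lmul k (H l)) (hb.coactOf l v) = (1 : H l) ⊗ₜ[k] v := by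
  simp [coactOf]

theorem braid_symm_apply_tmul {l : π} {X : Type u} [AddCommGroup X] [Module k X]
    (ρX : H l →ₐ[k] Module.End k X) (g : H l →ₗ[k] X)
    (hg : ∀ h h' : H l, g (h * h') = ρX h (g h')) (v : V) :
    (hb.braid l X ρX).symm (g 1 ⊗ₜ[k] v) = LinearMap.lTensor V g (hb.coactOf l v) := by
  have hnat := hb.hnatural l (H l) X (Algebra.lmul k (H l)) ρX g hg (hb.coactOf l v)
  rw [braid_coactOf, LinearMap.rTensor_tmul] at hnat
  exact (LinearEquiv.symm_apply_eq _).mpr hnat.symm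

theorem braid_regular_symm_apply_tmul (l : π) (x : H l) (v : V) :
    (hb.braid l (H l) (Algebra.lmul k (H l))).symm (x ⊗ₜ[k] v)
      = LinearMap.lTensor V (LinearMap.mulRight k x) (hb.coactOf l v) := by
  simpa using hb.braid_symm_apply_tmul (Algebra.lmul k (H l)) (LinearMap.mulRight k x)
    (fun h h' => by simp [mul_assoc]) v

theorem braid_tensor_regular_symm_apply_tmul (l₁ l₂ : π) (u : H l₁ ⊗[k] H l₂) (v : V) :
    (hb.braid (l₁ * l₂) (H l₁ ⊗[k] H l₂)
        (T.tensAlg (Algebra.lmul k (H l₁)) (Algebra.lmul k (H l₂)))).symm (u ⊗ₜ[k] v)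
      = LinearMap.lTensor V (LinearMap.mulRight k u ∘ₗ (T.Δ l₁ l₂).toLinearMap)
          (hb.coactOf (l₁ * l₂) v) := by
  simpa using hb.braid_symm_apply_tmul _ (LinearMap.mulRight k u ∘ₗ (T.Δ l₁ l₂).toLinearMap)
    (fun h h' => by simp [tensAlg_lmul_apply, mul_assoc]) v

theorem braid_tensor_symm {l₁ l₂ : π} {X₁ X₂ : Type u} [AddCommGroup X₁] [Module k X₁]
    [AddCommGroup X₂] [Module k X₂]
    (ρ₁ : H l₁ →ₐ[k] Module.End k X₁) (ρ₂ : H l₂ →ₐ[k] Module.End k X₂) :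
    (hb.braid (l₁ * l₂) (X₁ ⊗[k] X₂) (T.tensAlg ρ₁ ρ₂)).symm.toLinearMap
      = T.assocMod ρV ρ₁ ρ₂ ∘ₗ
        LinearMap.rTensor X₂ (hb.braid l₁ X₁ ρ₁).symm.toLinearMap ∘ₗ
        T.assocModInv (T.conjAlg ρ₁ a) ρV ρ₂ ∘ₗ
        LinearMap.lTensor X₁ (hb.braid l₂ X₂ ρ₂).symm.toLinearMap ∘ₗ
        T.assocMod (T.conjAlg ρ₁ a) (T.conjAlg ρ₂ a) ρV := by
  refine LinearMap.ext fun w => ?_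
  rw [LinearEquiv.coe_coe, LinearEquiv.symm_apply_eq, ← LinearEquiv.coe_coe, hb.hhexagon]
  simp only [LinearMap.comp_apply, assocModInv_assocMod, ← LinearMap.rTensor_comp_apply,
    ← LinearMap.lTensor_comp_apply, LinearEquiv.comp_symm, LinearMap.rTensor_id_apply,
    LinearMap.lTensor_id_apply, assocMod_assocModInv]

theorem ydCoassocLHS_coactOf_apply (l₁ l₂ : π) (v : V) :
    T.ydCoassocLHS ρV hb.coactOf l₁ l₂ v
      = TensorProduct.assoc k V (H l₁) (H l₂)
          (LinearMap.rTensor (H l₂) (hb.braid l₁ (H l₁) (Algebra.lmul k (H l₁))).symm.toLinearMap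
            (T.assocModInv (T.conjAlg (Algebra.lmul k (H l₁)) a) ρV (Algebra.lmul k (H l₂))
              ((1 : H l₁) ⊗ₜ[k] hb.coactOf l₂ v))) := by
  rw [assocModInv_conjAlg]
  simp only [ydCoassocLHS, LinearMap.comp_apply, LinearEquiv.coe_coe, assocModInv]
  congr 1
  generalize hb.coactOf l₂ v = z
  generalize T.Φinv l₁ a l₂ = t
  induction t using TensorProduct.induction_on with
  | zero => simp
  | add t₁ t₂ ht₁ ht₂ => simp only [map_add, LinearMap.add_apply, ht₁, ht₂]
  | tmul y₁ y₂₃ =>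
    induction y₂₃ using TensorProduct.induction_on with
    | zero => simp
    | add s₁ s₂ hs₁ hs₂ => simp only [tmul_add, map_add, LinearMap.add_apply, hs₁, hs₂]
    | tmul y₂ y₃ =>
      induction z using TensorProduct.induction_on with
      | zero => simp
      | add z₁ z₂ hz₁ hz₂ => simp only [tmul_add, map_add, hz₁, hz₂]
      | tmul v' s =>
        simp [pmapTens, pparam, pcomp, pright, TensorProduct.homTensorHomMap_apply,
          LinearMap.mul_flip_eq_mulRight, braid_regular_symm_apply_tmul]

theorem ydCoassocRHS_coactOf_apply (l₁ l₂ : π) (v : V) :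
    T.ydCoassocRHS ρV hb.coactOf l₁ l₂ v
      = pmapTens ρV.toLinearMap
          (pmapTens (Algebra.lmul k (H l₁)).toLinearMap (Algebra.lmul k (H l₂)).toLinearMap)
          (T.Φinv a l₁ l₂)
          ((hb.braid (l₁ * l₂) (H l₁ ⊗[k] H l₂)
              (T.tensAlg (Algebra.lmul k (H l₁)) (Algebra.lmul k (H l₂)))).symm
            (T.assocModInv (T.conjAlg (Algebra.lmul k (H l₁)) a)
              (T.conjAlg (Algebra.lmul k (H l₂)) a) ρV
              ((1 : H l₁) ⊗ₜ[k] ((1 : H l₂) ⊗ₜ[k] v)))) := by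
  rw [assocModInv_conjAlg_conjAlg]
  simp only [ydCoassocRHS, LinearMap.comp_apply, LinearEquiv.coe_coe, assocModInv]
  congr 1
  generalize T.Φinv l₁ l₂ a = t
  induction t using TensorProduct.induction_on with
  | zero => simp
  | add t₁ t₂ ht₁ ht₂ => simp only [map_add, LinearMap.add_apply, ht₁, ht₂]
  | tmul x₁ x₂₃ =>
    induction x₂₃ using TensorProduct.induction_on with
    | zero => simp
    | add s₁ s₂ hs₁ hs₂ => simp only [tmul_add, map_add, LinearMap.add_apply, hs₁, hs₂]
    | tmul x₂ h =>
      simp [pmapTens, pparam, pcomp, pright, TensorProduct.homTensorHomMap_apply,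
        braid_tensor_regular_symm_apply_tmul, LinearMap.mul_flip_eq_mulRight,
        LinearMap.mulRight_tmul, ← LinearMap.lTensor_comp_apply]

end HalfBraiding

section Statements
variable {k : Type u} [Field k] {π : Type v} [Group π]
variable {H : π → Type u} [∀ a, Ring (H a)] [∀ a, Algebra k (H a)]
open QuasiTuraevGCoalgebra

/-- The coaction induced by a half-braiding satisfies the
quasi-coassociativity axiom (ii) of Yetter-Drinfeld modules. -/
theorem stmt8 (T : QuasiTuraevGCoalgebra k H) {a : π} {V : Type u}
    [AddCommGroup V] [Module k V] (ρV : H a →ₐ[k] Module.End k V)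
    (hb : HalfBraiding T a V ρV) :
    T.ydCoassocProp ρV hb.coactOf := by
  intro l₁ l₂
  refine LinearMap.ext fun v => ?_
  have hexagon := LinearMap.congr_fun
    (hb.braid_tensor_symm (Algebra.lmul k (H l₁)) (Algebra.lmul k (H l₂)))
    (T.assocModInv (T.conjAlg (Algebra.lmul k (H l₁)) a) (T.conjAlg (Algebra.lmul k (H l₂)) a) ρV
      ((1 : H l₁) ⊗ₜ[k] ((1 : H l₂) ⊗ₜ[k] v)))
  simp only [LinearMap.comp_apply, LinearEquiv.coe_coe, assocMod_assocModInv,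
    LinearMap.lTensor_tmul] at hexagon
  rw [hb.ydCoassocLHS_coactOf_apply, hb.ydCoassocRHS_coactOf_apply, hexagon,
    pmapTens_Φinv_assocMod]
  rfl

end Statements
end

section
/- Let H be a quasi-Turaev π-coalgebra, α ∈ π, (V, ρ_V) an α-Yetter–Drinfeld module, λ ∈ π, X a left H_λ-module, and let c_{V,X} : V ⊗ X → ^αX ⊗ V be the bijection whose inverse is given by ĉ_{V,X}(^αx ⊗ v) = v_{(0,0)} ⊗ v_{(1,λ)} · x. Then c_{V,X} is H_{αλ}-linear, where V ⊗ X carries the H_{αλ}-action through Δ_{α,λ} and ^αX ⊗ V carries the H_{αλ}-action through Δ_{αλα⁻¹,α}. -/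
open scoped TensorProduct
open TensorProduct

universe u v
set_option maxHeartbeats 1000000

/-! On `x ⊗ v`, acting by `h` through `Δ_{αλα⁻¹,α}` and then applying `ĉ_{V,X}` gives the image
under `id ⊗ (· x)` of the right-hand side of the Yetter–Drinfeld compatibility (iii), i.e. of
`Δ_{α,λ}(h) · ρ_{V,λ}(v)`; since the orbit map `h ↦ h · x` is `H_λ`-linear, this is
`h · ĉ_{V,X}(x ⊗ v)`. So `ĉ_{V,X}` is `H_{αλ}`-linear, hence so is its inverse `c_{V,X}`. -/

lemma castA_apply {k : Type u} [Field k] {π : Type v} {H : π → Type u} [∀ a, Ring (H a)]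
    [∀ a, Algebra k (H a)] {a b : π} (e : a = b) (h : H a) :
    castA k H e h = castL k H e h := by
  subst e; rfl

namespace QuasiTuraevGCoalgebra
variable {k : Type u} [Field k] {π : Type v}
variable {H : π → Type u} [∀ a, Ring (H a)] [∀ a, Algebra k (H a)]
variable {a l : π} {V X : Type u} [AddCommGroup V] [Module k V] [AddCommGroup X] [Module k X]
variable (coact : ∀ l : π, V →ₗ[k] V ⊗[k] H l)
variable (ρX : H l →ₐ[k] Module.End k X)

-- `ρX.toLinearMap.flip x` is the orbit map `h ↦ h · x` of `x`.
lemma ydBraidInv_tmul (x : X) (v : V) :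
    ydBraidInv coact ρX (x ⊗ₜ[k] v) = LinearMap.lTensor V (ρX.toLinearMap.flip x) (coact l v) := by
  simp only [ydBraidInv, LinearMap.comp_apply, LinearEquiv.coe_coe, TensorProduct.comm_tmul,
    LinearMap.rTensor_tmul]
  induction coact l v using TensorProduct.induction_on with
  | zero => simp
  | tmul v₀ v₁ => simp [aev]
  | add w₁ w₂ ih₁ ih₂ => simp only [TensorProduct.add_tmul, map_add, ih₁, ih₂]

variable [Group π] (T : QuasiTuraevGCoalgebra k H) (ρV : H a →ₐ[k] Module.End k V)

lemma tensAlg_lTensor_of_intertwines {b c : π} {U M N : Type u}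
    [AddCommGroup U] [Module k U] [AddCommGroup M] [Module k M] [AddCommGroup N] [Module k N]
    (ρ : H b →ₐ[k] Module.End k U) (σ : H c →ₐ[k] Module.End k M)
    (σ' : H c →ₐ[k] Module.End k N) (g : M →ₗ[k] N) (hg : ∀ h m, g (σ h m) = σ' h (g m))
    (h : H (b * c)) (w : U ⊗[k] M) :
    LinearMap.lTensor U g (T.tensAlg ρ σ h w) = T.tensAlg ρ σ' h (LinearMap.lTensor U g w) := by
  simp only [tensAlg, AlgHom.coe_comp, Function.comp_apply]
  induction T.Δ b c h using TensorProduct.induction_on with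
  | zero => simp
  | tmul h₁ h₂ =>
    induction w using TensorProduct.induction_on with
    | zero => simp
    | tmul v m => simp [Module.endTensorEndAlgHom_apply, hg]
    | add w₁ w₂ ih₁ ih₂ => simp only [map_add, ih₁, ih₂]
  | add d₁ d₂ ih₁ ih₂ => simp only [map_add, LinearMap.add_apply, ih₁, ih₂]

lemma ydCompatRHS_tmul (h₁ : H (a * l * a⁻¹)) (h₂ : H a) (v : V) :
    ydCompatRHS T ρV (coact l) (h₁ ⊗ₜ[k] h₂) v
      = LinearMap.lTensor V
          ((LinearMap.mul k (H l)).flip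
            (castL k H (by group : a⁻¹ * (a * l * a⁻¹) * a⁻¹⁻¹ = l) (T.φ a⁻¹ (a * l * a⁻¹) h₁)))
          (coact l (ρV h₂ v)) := by
  simp [ydCompatRHS, pparam, pcomp, pright, LinearMap.lTensorHom]

lemma ydBraidInv_conjAct (d : H (a * l * a⁻¹) ⊗[k] H a) (x : X) (v : V) :
    ydBraidInv coact ρX
        (Module.endTensorEndAlgHom (R := k) (S := k) (A := k)
          (Algebra.TensorProduct.map (T.conjAlg ρX a) ρV d) (x ⊗ₜ[k] v))
      = LinearMap.lTensor V (ρX.toLinearMap.flip x) (ydCompatRHS T ρV (coact l) d v) := by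
  induction d using TensorProduct.induction_on with
  | zero => simp
  | tmul h₁ h₂ =>
    have orbit_conjAct : ρX.toLinearMap.flip (T.conjAlg ρX a h₁ x)
        = ρX.toLinearMap.flip x ∘ₗ (LinearMap.mul k (H l)).flip
            (castL k H (by group : a⁻¹ * (a * l * a⁻¹) * a⁻¹⁻¹ = l)
              (T.φ a⁻¹ (a * l * a⁻¹) h₁)) := by
      ext u
      simp [conjAlg, castA_apply]
    simp only [Algebra.TensorProduct.map_tmul, Module.endTensorEndAlgHom_apply,
      AlgebraTensorModule.map_tmul]
    rw [ydCompatRHS_tmul, ydBraidInv_tmul, orbit_conjAct, LinearMap.lTensor_comp_apply]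
  | add d₁ d₂ ih₁ ih₂ => simp only [map_add, LinearMap.add_apply, ih₁, ih₂]

theorem ydBraidInv_tensAlg (hcompat : T.ydCompatProp ρV coact) (h : H (a * l))
    (s : X ⊗[k] V) :
    ydBraidInv coact ρX
        (T.tensAlg (T.conjAlg ρX a) ρV (castA k H (by group : a * l = a * l * a⁻¹ * a) h) s)
      = T.tensAlg ρV ρX h (ydBraidInv coact ρX s) := by
  induction s using TensorProduct.induction_on with
  | zero => simp
  | tmul x v =>
    have orbit_intertwines : ∀ (g u : H l), ρX.toLinearMap.flip x (Algebra.lmul k (H l) g u)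
        = ρX g (ρX.toLinearMap.flip x u) := fun g u => by simp
    calc ydBraidInv coact ρX
          (T.tensAlg (T.conjAlg ρX a) ρV (castA k H (by group) h) (x ⊗ₜ[k] v))
        = LinearMap.lTensor V (ρX.toLinearMap.flip x) (ydCompatRHS T ρV (coact l)
            (T.Δ (a * l * a⁻¹) a (castA k H (by group) h)) v) :=
          ydBraidInv_conjAct coact ρX T ρV _ x v
      _ = LinearMap.lTensor V (ρX.toLinearMap.flip x)
            (T.tensAlg ρV (Algebra.lmul k (H l)) h (coact l v)) := by rw [hcompat]
      _ = T.tensAlg ρV ρX h (ydBraidInv coact ρX (x ⊗ₜ[k] v)) := by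
          rw [tensAlg_lTensor_of_intertwines T ρV _ ρX _ orbit_intertwines, ydBraidInv_tmul]
  | add s₁ s₂ ih₁ ih₂ => simp only [map_add, ih₁, ih₂]

end QuasiTuraevGCoalgebra

section Statements
variable {k : Type u} [Field k] {π : Type v} [Group π]
variable {H : π → Type u} [∀ a, Ring (H a)] [∀ a, Algebra k (H a)]
open QuasiTuraevGCoalgebra

/-- The bijection `c_{V,X}` whose inverse is `ĉ_{V,X}` is `H_{αλ}`-linear. -/
theorem stmt12 (T : QuasiTuraevGCoalgebra k H) {a l : π} {V X : Type u}
    [AddCommGroup V] [Module k V] [AddCommGroup X] [Module k X]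
    (ρV : H a →ₐ[k] Module.End k V) (coact : ∀ l : π, V →ₗ[k] V ⊗[k] H l)
    (hYD : T.IsYD ρV coact) (ρX : H l →ₐ[k] Module.End k X)
    (c : (V ⊗[k] X) ≃ (X ⊗[k] V))
    (hc : ∀ t : X ⊗[k] V, c.symm t = ydBraidInv coact ρX t) :
    ∀ (h : H (a * l)) (t : V ⊗[k] X),
      c ((T.tensAlg ρV ρX h) t)
        = (T.tensAlg (T.conjAlg ρX a) ρV
            (castA k H (by group : a * l = a * l * a⁻¹ * a) h)) (c t) := by
  intro h t
  rw [← Equiv.eq_symm_apply, hc, ydBraidInv_tensAlg coact ρX T ρV hYD.2.2, ← hc,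
    Equiv.symm_apply_apply]

end Statements
end
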